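/- arXiv:1709.10393 — 2 statements merged into one kernel-verified Lean document; each statement's English description precedes it below -/
import Mathlib

section
/- For a channel with binary label input B = (B₁,…,B_m) of independent bits and output Y, the generalized mutual information with the bit-wise metric q(b,y) = ∏ₖ f(y|Bₖ = bₖ) and parameter s = 1 equals ∑ₖ I(Bₖ; Y), the sum of the marginal bit-wise mutual informations. -/
open Finset Real MeasureTheory

/-- Bit-marginal density `f_{Y|Bₖ}(y|b) = 2^{-(m-1)} ∑_{b' : b'ₖ = b} f(y|b')`. -/
noncomputable def bitMarginal {α : Type*} (m : ℕ) (f : (Fin m → Bool) → α → ℝ)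
    (k : Fin m) (b : Bool) (y : α) : ℝ :=
  (2 : ℝ) ^ ((1 : ℤ) - m) *
    ∑ b' ∈ Finset.univ.filter (fun b' : Fin m → Bool => b' k = b), f b' y

/-- Output density `f_Y(y) = 2^{-m} ∑_b f(y|b)`. -/
noncomputable def outDensity {α : Type*} (m : ℕ) (f : (Fin m → Bool) → α → ℝ)
    (y : α) : ℝ :=
  (2 : ℝ) ^ (-(m : ℤ)) * ∑ b, f b y

/-- For a channel with uniform independent bit label input `B = (B₁,…,B_m)` and
output `Y`, the GMI with the bit-wise metric `q(b,y) = ∏ₖ f(y|Bₖ=bₖ)` at `s = 1`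
equals `∑ₖ I(Bₖ;Y)`, the sum of the marginal bit-wise mutual informations. -/
theorem gmi_bitwise_metric_eq_sum_bit_MI {α : Type*} [MeasurableSpace α]
    (μ : Measure α) (m : ℕ) (f : (Fin m → Bool) → α → ℝ)
    (hpos : ∀ b y, 0 < f b y)
    (hdens : ∀ b, ∫ y, f b y ∂μ = 1)
    (hint : ∀ b : Fin m → Bool, Integrable (fun y => f b y *
      Real.logb 2 ((∏ k, bitMarginal m f k (b k) y) /
        ((2 : ℝ) ^ (-(m : ℤ)) * ∑ b' : Fin m → Bool, ∏ k, bitMarginal m f k (b' k) y))) μ)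
    (hint' : ∀ (b : Fin m → Bool) (k : Fin m), Integrable (fun y => f b y *
      Real.logb 2 (bitMarginal m f k (b k) y / outDensity m f y)) μ) :
    (2 : ℝ) ^ (-(m : ℤ)) * ∑ b : Fin m → Bool, ∫ y, f b y *
        Real.logb 2 ((∏ k, bitMarginal m f k (b k) y) /
          ((2 : ℝ) ^ (-(m : ℤ)) * ∑ b' : Fin m → Bool, ∏ k, bitMarginal m f k (b' k) y)) ∂μ
      = ∑ k : Fin m, (2 : ℝ) ^ (-(m : ℤ)) * ∑ b : Fin m → Bool, ∫ y, f b y *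
          Real.logb 2 (bitMarginal m f k (b k) y / outDensity m f y) ∂μ := by

  have h2 : (2:ℝ) ≠ 0 := two_ne_zero
  have key : ∀ (b : Fin m → Bool) (y : α),
      Real.logb 2 ((∏ k, bitMarginal m f k (b k) y) /
        ((2:ℝ)^(-(m:ℤ)) * ∑ b' : Fin m → Bool, ∏ k, bitMarginal m f k (b' k) y))
      = ∑ k, Real.logb 2 (bitMarginal m f k (b k) y / outDensity m f y) := by
    intro b y
    have hD : 0 < outDensity m f y := by
      unfold outDensity
      exact mul_pos (zpow_pos (by norm_num) _)
        (Finset.sum_pos (fun b' _ => hpos b' y) Finset.univ_nonempty)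
    have hM : ∀ (k : Fin m) (bb : Bool), 0 < bitMarginal m f k bb y := by
      intro k bb
      unfold bitMarginal
      refine mul_pos (zpow_pos (by norm_num) _)
        (Finset.sum_pos (fun b' _ => hpos b' y) ⟨fun _ => bb, ?_⟩)
      simp
    have hsum : ∀ k : Fin m, ∑ j : Bool, bitMarginal m f k j y
        = 2 * outDensity m f y := by
      intro k
      rw [Fintype.sum_bool]
      unfold bitMarginal outDensity
      rw [← mul_add]
      have hfil : Finset.univ.filter (fun b' : Fin m → Bool => b' k = false)
          = Finset.univ.filter (fun b' : Fin m → Bool => ¬ b' k = true) := by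
        apply Finset.filter_congr
        intro x _
        simp
      rw [hfil, Finset.sum_filter_add_sum_filter_not]
      rw [show ((1:ℤ) - m) = 1 + (-(m:ℤ)) by ring, zpow_add₀ h2, zpow_one]
      ring
    have hswap : ∏ k : Fin m, ∑ j : Bool, bitMarginal m f k j y
        = ∑ b' : Fin m → Bool, ∏ k, bitMarginal m f k (b' k) y := by
      rw [Finset.prod_univ_sum, Fintype.piFinset_univ]
    have hden : (2:ℝ)^(-(m:ℤ)) * ∑ b' : Fin m → Bool, ∏ k, bitMarginal m f k (b' k) y
        = outDensity m f y ^ m := by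
      rw [← hswap]
      simp only [hsum]
      rw [Finset.prod_const, Finset.card_univ, Fintype.card_fin, mul_pow, ← mul_assoc]
      have h22 : (2:ℝ)^(-(m:ℤ)) * 2^m = 1 := by
        rw [← zpow_natCast (2:ℝ) m, ← zpow_add₀ h2]
        simp
      rw [h22, one_mul]
    rw [hden,
      show outDensity m f y ^ m = ∏ _k : Fin m, outDensity m f y by
        rw [Finset.prod_const, Finset.card_univ, Fintype.card_fin],
      ← Finset.prod_div_distrib]
    rw [Real.logb_prod]
    intro k _
    exact div_ne_zero (hM k (b k)).ne' hD.ne'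
  have hL : ∀ b : Fin m → Bool,
      (∫ y, f b y * Real.logb 2 ((∏ k, bitMarginal m f k (b k) y) /
          ((2:ℝ)^(-(m:ℤ)) * ∑ b' : Fin m → Bool, ∏ k, bitMarginal m f k (b' k) y)) ∂μ)
      = ∑ k : Fin m, ∫ y, f b y *
          Real.logb 2 (bitMarginal m f k (b k) y / outDensity m f y) ∂μ := by
    intro b
    rw [show (fun y => f b y * Real.logb 2 ((∏ k, bitMarginal m f k (b k) y) /
          ((2:ℝ)^(-(m:ℤ)) * ∑ b' : Fin m → Bool, ∏ k, bitMarginal m f k (b' k) y)))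
        = fun y => ∑ k : Fin m, f b y *
            Real.logb 2 (bitMarginal m f k (b k) y / outDensity m f y) from
      funext fun y => by rw [key b y, Finset.mul_sum]]
    exact integral_finset_sum _ (fun k _ => hint' b k)
  calc (2 : ℝ) ^ (-(m : ℤ)) * ∑ b : Fin m → Bool, ∫ y, f b y *
        Real.logb 2 ((∏ k, bitMarginal m f k (b k) y) /
          ((2 : ℝ) ^ (-(m : ℤ)) * ∑ b' : Fin m → Bool, ∏ k, bitMarginal m f k (b' k) y)) ∂μ
      = (2 : ℝ) ^ (-(m : ℤ)) * ∑ b : Fin m → Bool, ∑ k : Fin m, ∫ y, f b y *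
          Real.logb 2 (bitMarginal m f k (b k) y / outDensity m f y) ∂μ := by
        rw [Finset.sum_congr rfl fun b _ => hL b]
    _ = ∑ k : Fin m, (2 : ℝ) ^ (-(m : ℤ)) * ∑ b : Fin m → Bool, ∫ y, f b y *
          Real.logb 2 (bitMarginal m f k (b k) y / outDensity m f y) ∂μ := by
        rw [Finset.sum_comm, Finset.mul_sum]
end

section
/- Auxiliary-channel (mismatched) lower bound on mutual information: for uniform input over x₁,…,x_M, true channel densities f(y|xᵢ) and any auxiliary conditional densities q(y|xᵢ) > 0, the mutual information satisfies I ≥ (1/M) ∑ᵢ ∫ f(y|xᵢ) log₂( q(y|xᵢ) / ((1/M)∑ⱼ q(y|xⱼ)) ) dy. -/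
open Finset Real MeasureTheory

lemma key_pointwise {M : ℕ} (hM : 0 < M) (a b : Fin M → ℝ)
    (ha : ∀ i, 0 ≤ a i) (hb : ∀ i, 0 < b i) :
    0 ≤ ∑ i, (a i * Real.logb 2 (a i / ((1 / (M : ℝ)) * ∑ j, a j))
      - a i * Real.logb 2 (b i / ((1 / (M : ℝ)) * ∑ j, b j))) := by
  have hMpos : (0:ℝ) < M := by exact_mod_cast hM
  have hne : (Finset.univ : Finset (Fin M)).Nonempty := ⟨⟨0, hM⟩, Finset.mem_univ _⟩
  set F := (1 / (M : ℝ)) * ∑ j, a j with hF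
  set Q := (1 / (M : ℝ)) * ∑ j, b j with hQ
  have hsb : 0 < ∑ j, b j := Finset.sum_pos (fun i _ => hb i) hne
  have hQpos : 0 < Q := by rw [hQ]; positivity
  rcases eq_or_lt_of_le (Finset.sum_nonneg fun i (_ : i ∈ Finset.univ) => ha i) with hs | hs
  · refine le_of_eq (Finset.sum_eq_zero fun i _ => ?_).symm
    have hai : a i = 0 :=
      (Finset.sum_eq_zero_iff_of_nonneg (fun i _ => ha i)).mp hs.symm i (Finset.mem_univ i)
    rw [hai]; ring
  · have hFpos : 0 < F := by rw [hF]; positivity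
    have hlog2 : (0:ℝ) < Real.log 2 := Real.log_pos one_lt_two
    have hterm : ∀ i, (1 / Real.log 2) * (a i - F * b i / Q)
        ≤ a i * Real.logb 2 (a i / F) - a i * Real.logb 2 (b i / Q) := by
      intro i
      rcases eq_or_lt_of_le (ha i) with hz | hpos
      · have hfb : 0 ≤ F * b i / Q := div_nonneg (mul_nonneg hFpos.le (hb i).le) hQpos.le
        rw [← hz]
        simp only [zero_mul, sub_self, zero_sub]
        have h0 : 0 < 1 / Real.log 2 := by positivity
        nlinarith
      · have hbi := hb i
        have ht : 0 < F * b i / (a i * Q) := by positivity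
        have hlt : Real.log (F * b i / (a i * Q)) ≤ F * b i / (a i * Q) - 1 :=
          Real.log_le_sub_one_of_pos ht
        have heq : Real.logb 2 (a i / F) - Real.logb 2 (b i / Q)
            = - Real.log (F * b i / (a i * Q)) / Real.log 2 := by
          rw [Real.logb, Real.logb, Real.log_div (ne_of_gt hpos) (ne_of_gt hFpos),
            Real.log_div (ne_of_gt hbi) (ne_of_gt hQpos),
            Real.log_div (by positivity) (by positivity),
            Real.log_mul (ne_of_gt hFpos) (ne_of_gt hbi),
            Real.log_mul (ne_of_gt hpos) (ne_of_gt hQpos)]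
          ring
        have h1 : a i * Real.logb 2 (a i / F) - a i * Real.logb 2 (b i / Q)
            = a i * (- Real.log (F * b i / (a i * Q))) / Real.log 2 := by
          rw [← mul_sub, heq]; ring
        have hcancel : a i * (F * b i / (a i * Q)) = F * b i / Q := by
          field_simp
        have h2 : a i - F * b i / Q ≤ a i * (- Real.log (F * b i / (a i * Q))) := by
          nlinarith
        rw [h1, one_div_mul_eq_div]
        exact (div_le_div_iff_of_pos_right hlog2).mpr h2
    have hsa : ∑ j, a j = M * F := by rw [hF]; field_simp
    have hsb' : ∑ j, b j = M * Q := by rw [hQ]; field_simp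
    have hsum0 : ∑ i, (1 / Real.log 2) * (a i - F * b i / Q) = 0 := by
      rw [← Finset.mul_sum, Finset.sum_sub_distrib]
      have h2 : ∑ i, (F * b i / Q) = F / Q * ∑ i, b i := by
        rw [Finset.mul_sum]
        exact Finset.sum_congr rfl fun i _ => by ring
      rw [h2, hsa, hsb']
      field_simp
      ring
    calc (0:ℝ) = ∑ i, (1 / Real.log 2) * (a i - F * b i / Q) := hsum0.symm
      _ ≤ _ := Finset.sum_le_sum fun i _ => hterm i

/-- Auxiliary-channel (mismatched) lower bound on mutual information: for a
uniform input over `x₁,…,x_M`, true channel densities `f(y|xᵢ)` and any positive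
auxiliary densities `q(y|xᵢ)`,
`I ≥ (1/M) ∑ᵢ ∫ f(y|xᵢ) log₂( q(y|xᵢ) / ((1/M)∑ⱼ q(y|xⱼ)) ) dy`. -/
theorem mi_mismatched_lower_bound {α : Type*} [MeasurableSpace α]
    (μ : Measure α) (M : ℕ) (hM : 0 < M)
    (f q : Fin M → α → ℝ)
    (hf : ∀ i y, 0 ≤ f i y) (hfd : ∀ i, ∫ y, f i y ∂μ = 1)
    (hq : ∀ i y, 0 < q i y) (hqd : ∀ i, ∫ y, q i y ∂μ = 1)
    (hintf : ∀ i, Integrable (fun y => f i y *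
      Real.logb 2 (f i y / ((1 / (M : ℝ)) * ∑ j, f j y))) μ)
    (hintq : ∀ i, Integrable (fun y => f i y *
      Real.logb 2 (q i y / ((1 / (M : ℝ)) * ∑ j, q j y))) μ) :
    (1 / (M : ℝ)) * ∑ i, ∫ y, f i y *
        Real.logb 2 (f i y / ((1 / (M : ℝ)) * ∑ j, f j y)) ∂μ
      ≥ (1 / (M : ℝ)) * ∑ i, ∫ y, f i y *
          Real.logb 2 (q i y / ((1 / (M : ℝ)) * ∑ j, q j y)) ∂μ := by
  have hMpos : (0:ℝ) < M := by exact_mod_cast hM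
  have key : ∑ i, ∫ y, f i y *
          Real.logb 2 (q i y / ((1 / (M : ℝ)) * ∑ j, q j y)) ∂μ
      ≤ ∑ i, ∫ y, f i y *
          Real.logb 2 (f i y / ((1 / (M : ℝ)) * ∑ j, f j y)) ∂μ := by
    rw [← sub_nonneg, ← Finset.sum_sub_distrib]
    have heq : ∀ i ∈ (Finset.univ : Finset (Fin M)),
        (∫ y, f i y * Real.logb 2 (f i y / ((1 / (M : ℝ)) * ∑ j, f j y)) ∂μ)
        - (∫ y, f i y * Real.logb 2 (q i y / ((1 / (M : ℝ)) * ∑ j, q j y)) ∂μ)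
        = ∫ y, (f i y * Real.logb 2 (f i y / ((1 / (M : ℝ)) * ∑ j, f j y))
          - f i y * Real.logb 2 (q i y / ((1 / (M : ℝ)) * ∑ j, q j y))) ∂μ :=
      fun i _ => (integral_sub (hintf i) (hintq i)).symm
    have hint : ∀ i ∈ (Finset.univ : Finset (Fin M)), Integrable (fun y =>
        f i y * Real.logb 2 (f i y / ((1 / (M : ℝ)) * ∑ j, f j y))
        - f i y * Real.logb 2 (q i y / ((1 / (M : ℝ)) * ∑ j, q j y))) μ :=
      fun i _ => (hintf i).sub (hintq i)
    rw [Finset.sum_congr rfl heq, ← integral_finset_sum _ hint]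
    refine integral_nonneg fun y => ?_
    exact key_pointwise hM (fun i => f i y) (fun i => q i y) (fun i => hf i y) (fun i => hq i y)
  exact mul_le_mul_of_nonneg_left key (by positivity)
end
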